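/- Let θ : ℝ → ℝ be smooth. Then 𝒮_{2n}^θ(x) = 0 for every integer n ≥ 1 and every x ∈ ℝ if and only if θ is a constant function. -/

import Mathlib

noncomputable section

/-- `g_R(t) = -(R/π)·log(1 - (π/R)·t)`. -/
def gR (R t : ℝ) : ℝ := -(R / Real.pi) * Real.log (1 - (Real.pi / R) * t)

/-- `f` is a (smooth) solution of `f'' + θ·f = 0`. -/
def IsSolution (θ f : ℝ → ℝ) : Prop :=
  ContDiff ℝ (⊤ : ℕ∞) f ∧ ∀ t, deriv (deriv f) t + θ t * f t = 0

/-- `f₁, f₂` is the fundamental pair of solutions of `f'' + θ·f = 0` at `x`: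
`f₁(x) = f₂'(x) = 1`, `f₂(x) = f₁'(x) = 0`. -/
def IsFundPair (θ : ℝ → ℝ) (x : ℝ) (f₁ f₂ : ℝ → ℝ) : Prop :=
  IsSolution θ f₁ ∧ IsSolution θ f₂ ∧
  f₁ x = 1 ∧ deriv f₁ x = 0 ∧ f₂ x = 0 ∧ deriv f₂ x = 1

/-- The `n`-th `g_R`-Schwarzian `𝒮_n^{θ,g_R}(x)`, computed from the fundamental pair
`f₁, f₂` at `x`: the `n`-th derivative at `t = 0` of `t ↦ h_x(x + g_R(t))`,
where `h_x = f₂/f₁`. -/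
def SchR (R x : ℝ) (f₁ f₂ : ℝ → ℝ) (n : ℕ) : ℝ :=
  iteratedDeriv n (fun t => f₂ (x + gR R t) / f₁ (x + gR R t)) 0

/-- The determinant `𝒟_n^{θ,g_R}(x)` of the `n×n` Hankel matrix with `(i,j)` entry
`𝒮_{i+j-1}^{θ,g_R}(x)/(i+j-1)!`. -/
def DetR (R x : ℝ) (f₁ f₂ : ℝ → ℝ) (n : ℕ) : ℝ :=
  (Matrix.of fun i j : Fin n =>
    SchR R x f₁ f₂ (i.1 + j.1 + 1) / (Nat.factorial (i.1 + j.1 + 1) : ℝ)).det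

/-- Hypothesis (H_R): `f₁, f₂` are linearly independent solutions of `f'' + θ·f = 0`
(constant Wronskian `W = f₁f₂' - f₁'f₂ ≠ 0`) and `h = f₂/f₁` admits a meromorphic
extension `H` to the strip `{|Im z| < R}` (holomorphic off the real zeros of `f₁`,
with poles at those zeros) which satisfies `W·Im H(z)·Im z > 0` for `0 < Im z < R`. -/
def HypR (θ : ℝ → ℝ) (R : ℝ) : Prop :=
  ∃ (f₁ f₂ : ℝ → ℝ) (H : ℂ → ℂ),
    IsSolution θ f₁ ∧ IsSolution θ f₂ ∧
    f₁ 0 * deriv f₂ 0 - deriv f₁ 0 * f₂ 0 ≠ 0 ∧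
    (∀ t : ℝ, f₁ t ≠ 0 → H t = ((f₂ t / f₁ t : ℝ) : ℂ)) ∧
    DifferentiableOn ℂ H
      {z : ℂ | |z.im| < R ∧ ∀ t : ℝ, f₁ t = 0 → z ≠ (t : ℂ)} ∧
    (∀ t : ℝ, f₁ t = 0 →
      Filter.Tendsto (fun z => ‖H z‖) (nhdsWithin (t : ℂ) {(t : ℂ)}ᶜ) Filter.atTop) ∧
    (∀ z : ℂ, 0 < z.im → z.im < R →
      0 < (f₁ 0 * deriv f₂ 0 - deriv f₁ 0 * f₂ 0) * (H z).im * z.im)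

/-- `(i,j)` entry (1-based, clamped to ℕ) of the matrix `T(f,n)(t)`:
`f^{(j-i)}(t)/(j-i)!` if `i ≤ j`, and `0` otherwise. -/
def Tentry (f : ℝ → ℝ) (t : ℝ) (i j : ℕ) : ℝ :=
  if i ≤ j then iteratedDeriv (j - i) f t / (Nat.factorial (j - i) : ℝ) else 0

end

/-!
Since the Wronskian of the fundamental pair at `x` is `1`, we have `h_x' = 1 / f_{x,1}²`, and
three more differentiations using `f'' = -θ f`, `f_{x,1}(x) = 1`, `f_{x,1}'(x) = 0` give
`𝒮_4^θ(x) = 2 θ'(x)`; so `𝒮_4^θ ≡ 0` already forces `θ` to be constant. Conversely, when `θ` is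
symmetric about `x` (e.g. constant), uniqueness for the equation gives
`f_{x,1}(2x - t) = f_{x,1}(t)` and `f_{x,2}(2x - t) = -f_{x,2}(t)`, so `h_x` is odd about `x`
and its even derivatives at `x` vanish.

The fundamental pair exists for every `x` because a linear system `y' = A(t) y` with continuous
`A` has global solutions: the Picard series `∑ₙ yₙ`, `yₙ₊₁(t) = ∫ₓᵗ A(s) yₙ(s) ds`, is dominated
on `|t - x| ≤ T` by the exponential series of `‖y₀‖ K T`, where `K` bounds `‖A‖` there.
-/

noncomputable section

open Set Metric Filter Topology MeasureTheory intervalIntegral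
open scoped Interval

theorem norm_intervalIntegral_le_mul_abs_pow {E : Type*} [NormedAddCommGroup E] [NormedSpace ℝ E]
    {f : ℝ → E} {a b B : ℝ} {n : ℕ} (hf : ∀ s ∈ Ι a b, ‖f s‖ ≤ B * |s - a| ^ n) :
    ‖∫ s in a..b, f s‖ ≤ B * (|b - a| ^ (n + 1) / (n + 1)) := by
  rw [norm_integral_eq_norm_integral_uIoc, ← integral_pow_abs_sub_uIoc,
    ← MeasureTheory.integral_const_mul]
  refine norm_integral_le_of_norm_le
    (continuous_const.mul ((continuous_id.sub continuous_const).abs.pow n)).integrableOn_uIoc ?_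
  exact (ae_restrict_iff' measurableSet_uIoc).mpr (.of_forall hf)

namespace LinearODE

variable {E : Type*} [NormedAddCommGroup E] [NormedSpace ℝ E]
  {A : ℝ → E →L[ℝ] E} {x : ℝ} {y₀ : E}

variable (A x y₀) in
def picardTerm : ℕ → ℝ → E
  | 0 => fun _ => y₀
  | n + 1 => fun t => ∫ s in x..t, A s (picardTerm n s)

theorem continuous_picardTerm (hA : Continuous A) : ∀ n, Continuous (picardTerm A x y₀ n)
  | 0 => continuous_const
  | n + 1 => continuous_primitive
      (fun _ _ => (hA.clm_apply (continuous_picardTerm hA n)).intervalIntegrable _ _) x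

theorem hasDerivAt_picardTerm_succ [CompleteSpace E] (hA : Continuous A) (n : ℕ) (t : ℝ) :
    HasDerivAt (picardTerm A x y₀ (n + 1)) (A t (picardTerm A x y₀ n t)) t :=
  ((hA.clm_apply (continuous_picardTerm hA n)).integral_hasStrictDerivAt x t).hasDerivAt

theorem norm_picardTerm_le {T K : ℝ} (hK : ∀ s ∈ closedBall x T, ‖A s‖ ≤ K) (n : ℕ) :
    ∀ t ∈ closedBall x T, ‖picardTerm A x y₀ n t‖ ≤ ‖y₀‖ * ((K * |t - x|) ^ n / n.factorial) := by
  induction n with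
  | zero => simp [picardTerm]
  | succ n ih =>
    intro t ht
    have hK0 : 0 ≤ K :=
      (norm_nonneg _).trans (hK x (mem_closedBall_self (nonneg_of_mem_closedBall ht)))
    have bound : ∀ s ∈ Ι x t, ‖A s (picardTerm A x y₀ n s)‖
        ≤ ‖y₀‖ * K ^ (n + 1) / n.factorial * |s - x| ^ n := by
      intro s hs
      have hsT : s ∈ closedBall x T :=
        (convex_closedBall x T).segment_subset (mem_closedBall_self (nonneg_of_mem_closedBall ht))
          ht (by rw [segment_eq_uIcc]; exact uIoc_subset_uIcc hs)
      calc ‖A s (picardTerm A x y₀ n s)‖ ≤ K * (‖y₀‖ * ((K * |s - x|) ^ n / n.factorial)) :=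
            (A s).le_of_opNorm_le (hK s hsT) _ |>.trans (mul_le_mul_of_nonneg_left (ih s hsT) hK0)
        _ = _ := by ring
    calc ‖picardTerm A x y₀ (n + 1) t‖
        ≤ ‖y₀‖ * K ^ (n + 1) / n.factorial * (|t - x| ^ (n + 1) / (n + 1)) :=
          norm_intervalIntegral_le_mul_abs_pow bound
      _ = _ := by rw [Nat.factorial_succ]; push_cast; field_simp; ring

theorem exists_hasDerivAt [CompleteSpace E] (hA : Continuous A) (x : ℝ) (y₀ : E) :
    ∃ y : ℝ → E, y x = y₀ ∧ ∀ t, HasDerivAt y (A t (y t)) t := by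
  set P := picardTerm A x y₀
  refine ⟨fun t => y₀ + ∑' n, P (n + 1) t, by simp [P, picardTerm], fun t => ?_⟩
  set T := |t - x| + 1
  obtain ⟨K, hK⟩ := (isCompact_closedBall x T).exists_bound_of_continuousOn hA.continuousOn
  have hK0 : 0 ≤ K := (norm_nonneg _).trans (hK x (mem_closedBall_self (by positivity)))
  have hu : Summable fun n => K * (‖y₀‖ * ((K * T) ^ n / n.factorial)) :=
    ((Real.summable_pow_div_factorial _).mul_left _).mul_left _
  have hderiv_le (n : ℕ) (s : ℝ) (hs : s ∈ ball x T) :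
      ‖A s (P n s)‖ ≤ K * (‖y₀‖ * ((K * T) ^ n / n.factorial)) := by
    have hsT : s ∈ closedBall x T := ball_subset_closedBall hs
    have hsx : |s - x| ≤ T := by simpa [Real.dist_eq] using hsT
    calc ‖A s (P n s)‖ ≤ K * ‖P n s‖ := (A s).le_of_opNorm_le (hK s hsT) _
      _ ≤ _ := by grw [norm_picardTerm_le hK n s hsT, hsx]
  have hderiv : HasDerivAt (fun t => ∑' n, P (n + 1) t) (∑' n, A t (P n t)) t :=
    hasDerivAt_tsum_of_isPreconnected hu isOpen_ball (convex_ball x T).isPreconnected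
      (fun n s _ => hasDerivAt_picardTerm_succ hA n s) hderiv_le (mem_ball_self (by positivity))
      (by simp only [picardTerm, integral_same]; exact summable_zero) (by simp [T, Real.dist_eq])
  have hsum : Summable (fun n => P n t) :=
    .of_norm_bounded ((Real.summable_pow_div_factorial _).mul_left _)
      (fun n => norm_picardTerm_le hK n t (by simp [T, Real.dist_eq]))
  refine (hderiv.const_add y₀).congr_deriv ?_
  rw [← (A t).map_tsum hsum, hsum.tsum_eq_zero_add]
  rfl

theorem eq_of_hasDerivAt (hA : Continuous A) {y z : ℝ → E}
    (hy : ∀ t, HasDerivAt y (A t (y t)) t) (hz : ∀ t, HasDerivAt z (A t (z t)) t)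
    (hyz : y x = z x) : y = z := by
  funext t
  set a := min x t - 1
  set b := max x t + 1
  obtain ⟨K, hK⟩ := isCompact_Icc (a := a) (b := b) |>.exists_bound_of_continuousOn hA.continuousOn
  have hLip : ∀ s ∈ Ioo a b, LipschitzOnWith K.toNNReal (A s) univ := fun s hs =>
    ((A s).lipschitz.weaken (by
      rw [← NNReal.coe_le_coe, Real.coe_toNNReal']
      exact (hK s (Ioo_subset_Icc_self hs)).trans (le_max_left _ _))).lipschitzOnWith
  exact ODE_solution_unique_of_mem_Ioo hLip (t₀ := x) ⟨by grind, by grind⟩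
    (fun s _ => ⟨hy s, trivial⟩) (fun s _ => ⟨hz s, trivial⟩) hyz ⟨by grind, by grind⟩

theorem contDiff_of_hasDerivAt (hA : ContDiff ℝ (⊤ : ℕ∞) A) {y : ℝ → E}
    (hy : ∀ t, HasDerivAt y (A t (y t)) t) : ContDiff ℝ (⊤ : ℕ∞) y := by
  have hderiv : deriv y = fun t => A t (y t) := funext fun t => (hy t).deriv
  refine contDiff_infty.mpr fun m => ?_
  induction m with
  | zero => exact contDiff_zero.mpr (continuous_iff_continuousAt.mpr fun t => (hy t).continuousAt)
  | succ m ih =>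
    rw [Nat.cast_succ, contDiff_succ_iff_deriv]
    refine ⟨fun t => (hy t).differentiableAt, by simp, ?_⟩
    rw [hderiv]
    exact (hA.of_le (by exact_mod_cast le_top)).clm_apply ih

end LinearODE

def companion (θ : ℝ → ℝ) (t : ℝ) : ℝ × ℝ →L[ℝ] ℝ × ℝ :=
  .inl ℝ ℝ ℝ ∘L .snd ℝ ℝ ℝ - θ t • (.inr ℝ ℝ ℝ ∘L .fst ℝ ℝ ℝ)

@[simp]
theorem companion_apply (θ : ℝ → ℝ) (t : ℝ) (p : ℝ × ℝ) :
    companion θ t p = (p.2, -(θ t * p.1)) := by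
  simp [companion]

theorem contDiff_companion {θ : ℝ → ℝ} {n : WithTop ℕ∞} (hθ : ContDiff ℝ n θ) :
    ContDiff ℝ n (companion θ) :=
  contDiff_const.sub (hθ.smul contDiff_const)

namespace IsSolution

variable {θ f g : ℝ → ℝ}

theorem hasDerivAt (hf : IsSolution θ f) (t : ℝ) : HasDerivAt f (deriv f t) t :=
  (hf.1.differentiable (by simp) t).hasDerivAt

theorem hasDerivAt_deriv (hf : IsSolution θ f) (t : ℝ) :
    HasDerivAt (deriv f) (-(θ t * f t)) t := by
  have h := ((contDiff_infty_iff_deriv.mp hf.1).2.differentiable (by simp) t).hasDerivAt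
  have hode : deriv (deriv f) t = -(θ t * f t) := by linarith [hf.2 t]
  rwa [hode] at h

theorem hasDerivAt_companion (hf : IsSolution θ f) (t : ℝ) :
    HasDerivAt (fun t => (f t, deriv f t)) (companion θ t (f t, deriv f t)) t := by
  simpa using (hf.hasDerivAt t).prodMk (hf.hasDerivAt_deriv t)

theorem eq_of_eq_of_deriv_eq (hθ : Continuous θ) (hf : IsSolution θ f) (hg : IsSolution θ g)
    {x : ℝ} (h₀ : f x = g x) (h₁ : deriv f x = deriv g x) : f = g := by
  have hA := (contDiff_companion (n := 0) (contDiff_zero.mpr hθ)).continuous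
  have h := LinearODE.eq_of_hasDerivAt hA hf.hasDerivAt_companion hg.hasDerivAt_companion
    (Prod.ext h₀ h₁)
  exact funext fun t => congrArg Prod.fst (congrFun h t)

theorem neg (hf : IsSolution θ f) : IsSolution θ (fun t => -f t) := by
  refine ⟨hf.1.neg, fun t => ?_⟩
  have hd : deriv (fun t => -f t) = fun t => -deriv f t := funext fun t => deriv.fun_neg
  rw [hd, deriv.fun_neg]
  linarith [hf.2 t]

theorem comp_const_sub (hf : IsSolution θ f) {a : ℝ} (hθ : ∀ t, θ (a - t) = θ t) :
    IsSolution θ (fun t => f (a - t)) := by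
  refine ⟨hf.1.comp (contDiff_const.sub contDiff_id), fun t => ?_⟩
  have hd : deriv (fun t => f (a - t)) = fun t => -deriv f (a - t) :=
    funext (deriv_comp_const_sub f a)
  rw [hd, deriv.fun_neg, deriv_comp_const_sub, ← hθ t]
  linarith [hf.2 (a - t)]

theorem wronskian_eq (hf : IsSolution θ f) (hg : IsSolution θ g) (s t : ℝ) :
    f s * deriv g s - deriv f s * g s = f t * deriv g t - deriv f t * g t := by
  have hW (t : ℝ) : HasDerivAt (fun t => f t * deriv g t - deriv f t * g t) 0 t :=
    (((hf.hasDerivAt t).mul (hg.hasDerivAt_deriv t)).sub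
      ((hf.hasDerivAt_deriv t).mul (hg.hasDerivAt t))).congr_deriv (by ring)
  exact is_const_of_deriv_eq_zero (fun t => (hW t).differentiableAt) (fun t => (hW t).deriv) s t

theorem iteratedDeriv_three_inv_sq (hf : IsSolution θ f) {x : ℝ} (hθ : DifferentiableAt ℝ θ x)
    (h₀ : f x = 1) (h₁ : deriv f x = 0) :
    iteratedDeriv 3 (fun t => (f t ^ 2)⁻¹) x = 2 * deriv θ x := by
  have hne : ∀ᶠ t in 𝓝 x, f t ≠ 0 := hf.1.continuous.continuousAt.eventually_ne (by simp [h₀])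
  have h₂ : deriv (fun t => (f t ^ 2)⁻¹) =ᶠ[𝓝 x] fun t => -2 * deriv f t / f t ^ 3 := by
    filter_upwards [hne] with t ht
    refine (((hf.hasDerivAt t).pow 2).inv (pow_ne_zero 2 ht)).deriv.trans ?_
    simp only [Pi.pow_apply]
    field_simp
    ring
  have h₃ : deriv (fun t => -2 * deriv f t / f t ^ 3) =ᶠ[𝓝 x]
      fun t => 2 * θ t / f t ^ 2 + 6 * deriv f t ^ 2 / f t ^ 4 := by
    filter_upwards [hne] with t ht
    refine (((hf.hasDerivAt_deriv t).const_mul (-2)).div ((hf.hasDerivAt t).pow 3)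
      (pow_ne_zero 3 ht)).deriv.trans ?_
    simp only [Pi.pow_apply]
    field_simp
    ring
  have h₄ : HasDerivAt (fun t => 2 * θ t / f t ^ 2 + 6 * deriv f t ^ 2 / f t ^ 4)
      (2 * deriv θ x) x := by
    refine (((hθ.hasDerivAt.const_mul 2).div ((hf.hasDerivAt x).pow 2) (by simp [h₀])).add
      ((((hf.hasDerivAt_deriv x).pow 2).const_mul 6).div ((hf.hasDerivAt x).pow 4)
        (by simp [h₀]))).congr_deriv ?_
    simp [h₀, h₁]
  rw [iteratedDeriv_succ', h₂.iteratedDeriv_eq, iteratedDeriv_succ', h₃.iteratedDeriv_eq,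
    iteratedDeriv_one, h₄.deriv]

end IsSolution

theorem exists_isSolution {θ : ℝ → ℝ} (hθ : ContDiff ℝ (⊤ : ℕ∞) θ) (x c₀ c₁ : ℝ) :
    ∃ f, IsSolution θ f ∧ f x = c₀ ∧ deriv f x = c₁ := by
  obtain ⟨Y, hY₀, hY⟩ := LinearODE.exists_hasDerivAt (contDiff_companion hθ).continuous x (c₀, c₁)
  have hfst (t : ℝ) : HasDerivAt (fun t => (Y t).1) (Y t).2 t := by
    have h := hY t
    rw [companion_apply] at h
    exact hasFDerivAt_fst.comp_hasDerivAt (f := Y) t h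
  have hsnd (t : ℝ) : HasDerivAt (fun t => (Y t).2) (-(θ t * (Y t).1)) t := by
    have h := hY t
    rw [companion_apply] at h
    exact hasFDerivAt_snd.comp_hasDerivAt (f := Y) t h
  have hderiv : deriv (fun t => (Y t).1) = fun t => (Y t).2 := funext fun t => (hfst t).deriv
  refine ⟨fun t => (Y t).1, ⟨(LinearODE.contDiff_of_hasDerivAt (contDiff_companion hθ) hY).fst,
    fun t => ?_⟩, by simp [hY₀], by simp [hderiv, hY₀]⟩
  rw [hderiv, (hsnd t).deriv]
  ring

namespace IsFundPair

variable {θ f₁ f₂ : ℝ → ℝ} {x : ℝ}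

theorem iteratedDeriv_four (h : IsFundPair θ x f₁ f₂) (hθ : DifferentiableAt ℝ θ x) :
    iteratedDeriv 4 (fun t => f₂ t / f₁ t) x = 2 * deriv θ x := by
  obtain ⟨hf₁, hf₂, h₁₀, h₁₁, h₂₀, h₂₁⟩ := h
  have hW (t : ℝ) : f₁ t * deriv f₂ t - deriv f₁ t * f₂ t = 1 := by
    rw [hf₁.wronskian_eq hf₂ t x, h₁₀, h₁₁, h₂₀, h₂₁]
    ring
  have hne : ∀ᶠ t in 𝓝 x, f₁ t ≠ 0 := hf₁.1.continuous.continuousAt.eventually_ne (by simp [h₁₀])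
  have hderiv : deriv (fun t => f₂ t / f₁ t) =ᶠ[𝓝 x] fun t => (f₁ t ^ 2)⁻¹ := by
    filter_upwards [hne] with t ht
    refine ((hf₂.hasDerivAt t).div (hf₁.hasDerivAt t) ht).deriv.trans ?_
    rw [show deriv f₂ t * f₁ t - f₂ t * deriv f₁ t = 1 by linarith [hW t], one_div]
  rw [iteratedDeriv_succ', hderiv.iteratedDeriv_eq, hf₁.iteratedDeriv_three_inv_sq hθ h₁₀ h₁₁]

theorem div_comp_const_sub (h : IsFundPair θ x f₁ f₂) (hθ : Continuous θ)
    (hsymm : ∀ t, θ (2 * x - t) = θ t) (t : ℝ) :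
    f₂ (2 * x - t) / f₁ (2 * x - t) = -(f₂ t / f₁ t) := by
  obtain ⟨hf₁, hf₂, h₁₀, h₁₁, h₂₀, h₂₁⟩ := h
  have hx : 2 * x - x = x := by ring
  have e₁ : (fun t => f₁ (2 * x - t)) = f₁ :=
    (hf₁.comp_const_sub hsymm).eq_of_eq_of_deriv_eq hθ hf₁ (x := x) (by simp [hx])
      (by simp [deriv_comp_const_sub, hx, h₁₁])
  have e₂ : (fun t => -f₂ (2 * x - t)) = f₂ :=
    (hf₂.comp_const_sub hsymm).neg.eq_of_eq_of_deriv_eq hθ hf₂ (x := x) (by simp [hx, h₂₀])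
      (by simp [deriv_comp_const_sub, hx, h₂₁])
  rw [congrFun e₁ t, ← congrFun e₂ t]
  ring

end IsFundPair

theorem iteratedDeriv_two_mul_eq_zero_of_odd {h : ℝ → ℝ} {a : ℝ}
    (hodd : ∀ t, h (2 * a - t) = -h t) (n : ℕ) : iteratedDeriv (2 * n) h a = 0 := by
  have key := congrFun (iteratedDeriv_comp_const_sub (2 * n) h (2 * a)) a
  simp only [hodd] at key
  rw [iteratedDeriv_fun_neg, pow_mul, neg_one_sq, one_pow, one_smul,
    show 2 * a - a = a by ring] at key
  linarith

/-- For smooth θ, `𝒮_{2n}^θ(x) = 0` for every `n ≥ 1` and every `x` if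
and only if θ is constant. -/
theorem stmt16 (θ : ℝ → ℝ) (hθ : ContDiff ℝ (⊤ : ℕ∞) θ) :
    (∀ n : ℕ, 1 ≤ n → ∀ (x : ℝ) (f₁ f₂ : ℝ → ℝ), IsFundPair θ x f₁ f₂ →
        iteratedDeriv (2 * n) (fun t => f₂ t / f₁ t) x = 0) ↔
      ∃ K : ℝ, ∀ x : ℝ, θ x = K := by
  have hθd : Differentiable ℝ θ := hθ.differentiable (by simp)
  constructor
  · intro hyp
    have hθ' (y : ℝ) : deriv θ y = 0 := by
      obtain ⟨f₁, hf₁, h₁₀, h₁₁⟩ := exists_isSolution hθ y 1 0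
      obtain ⟨f₂, hf₂, h₂₀, h₂₁⟩ := exists_isSolution hθ y 0 1
      have hpair : IsFundPair θ y f₁ f₂ := ⟨hf₁, hf₂, h₁₀, h₁₁, h₂₀, h₂₁⟩
      have h4 := hyp 2 one_le_two y f₁ f₂ hpair
      rw [hpair.iteratedDeriv_four (hθd y)] at h4
      linarith
    exact ⟨θ 0, fun y => is_const_of_deriv_eq_zero hθd hθ' y 0⟩
  · rintro ⟨K, hK⟩ n - x f₁ f₂ hpair
    exact iteratedDeriv_two_mul_eq_zero_of_odd
      (hpair.div_comp_const_sub hθ.continuous (by simp [hK])) n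

end
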